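/- Let X be a Gaussian random p-vector with mean Γ τ and covariance Γ, where Γ is symmetric positive definite, Υ is a p×r full-rank matrix, and τ ∈ R^p. Set P := Γ^{1/2} Υ (Υ' Γ Υ)^{-1} Υ' Γ^{1/2} and P⊥ := I_p − P. Then Y := Γ^{-1/2} P Γ^{-1/2} X − τ is Gaussian with mean −Γ^{-1/2} P⊥ Γ^{1/2} τ and covariance Γ^{-1/2} P Γ^{-1/2}, so that E[Y Y'] = Γ^{-1/2} P Γ^{-1/2} + Γ^{-1/2} P⊥ Γ^{1/2} τ τ' Γ^{1/2} P⊥ Γ^{-1/2}. -/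

import Mathlib

open MeasureTheory ProbabilityTheory Matrix

/-- The standard Gaussian measure on `ℝ^p` (mean `0`, covariance `I_p`). -/
noncomputable def stdGaussian (p : ℕ) : Measure (Fin p → ℝ) :=
  Measure.pi (fun _ => gaussianReal 0 1)

open scoped ComplexOrder in
/-- The positive semidefinite square root of a positive semidefinite matrix (the definition
`Matrix.PosSemidef.sqrt` of the older Mathlib, which has since been removed). -/
noncomputable def Matrix.PosSemidef.sqrt {n : Type*} [Fintype n] [DecidableEq n] {𝕜 : Type*}
    [RCLike 𝕜] {A : Matrix n n 𝕜} (hA : A.PosSemidef) : Matrix n n 𝕜 :=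
  hA.1.eigenvectorUnitary.1 * diagonal ((fun x : ℝ => (x : 𝕜)) ∘ Real.sqrt ∘ hA.1.eigenvalues) *
  (star hA.1.eigenvectorUnitary : Matrix n n 𝕜)

/-!
Writing `R = Γ^{1/2}` and `M = R⁻¹ P`, the definitions unfold to `Y w = δ + M w` with `w`
standard Gaussian, so `E[Y] = δ` and `E[Y Yᵀ] = δ δᵀ + M Mᵀ`. Since `P` is the orthogonal
projection onto the column space of `R Υ`, it is symmetric and idempotent, whence
`M Mᵀ = R⁻¹ P R⁻¹`; and `δ δᵀ` is the conjugate of `τ τᵀ` by `R⁻¹ P⊥ R`.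
-/

namespace Matrix

section Sqrt

open scoped ComplexOrder

variable {n 𝕜 : Type*} [Fintype n] [DecidableEq n] [RCLike 𝕜] {A : Matrix n n 𝕜}

lemma PosSemidef.sqrt_mul_self (hA : A.PosSemidef) : hA.sqrt * hA.sqrt = A := by
  set U : Matrix n n 𝕜 := hA.1.eigenvectorUnitary.1
  set D := diagonal ((fun x : ℝ => (x : 𝕜)) ∘ Real.sqrt ∘ hA.1.eigenvalues)
  have hD : D * D = diagonal (RCLike.ofReal ∘ hA.1.eigenvalues) := by
    rw [diagonal_mul_diagonal]
    congr 1
    funext i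
    simp [← RCLike.ofReal_mul, Real.mul_self_sqrt (hA.eigenvalues_nonneg i)]
  have hU : star U * U = 1 := Unitary.coe_star_mul_self _
  calc hA.sqrt * hA.sqrt = U * D * (star U * U) * D * star U := by
        simp only [PosSemidef.sqrt, U, D, Matrix.mul_assoc]
    _ = A := by
        rw [hU, Matrix.mul_one, Matrix.mul_assoc U D D, hD]
        exact hA.1.spectral_theorem.symm

lemma PosSemidef.isHermitian_sqrt (hA : A.PosSemidef) : hA.sqrt.IsHermitian := by
  rw [PosSemidef.sqrt, star_eq_conjTranspose]
  refine isHermitian_mul_mul_conjTranspose _ (isHermitian_diagonal_of_self_adjoint _ ?_)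
  ext i
  simp

lemma PosDef.isUnit_sqrt (hA : A.PosDef) : IsUnit hA.posSemidef.sqrt := by
  rw [isUnit_iff_isUnit_det]
  refine isUnit_of_mul_isUnit_left (y := hA.posSemidef.sqrt.det) ?_
  rw [← det_mul, hA.posSemidef.sqrt_mul_self]
  exact (isUnit_iff_isUnit_det A).mp hA.isUnit

end Sqrt

lemma mulVec_injective_of_rank_eq_card {m n K : Type*} [Fintype n] [Field K]
    {A : Matrix m n K} (h : A.rank = Fintype.card n) : Function.Injective A.mulVec := by
  rw [mulVec_injective_iff, linearIndependent_iff_card_eq_finrank_span, ← h,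
    rank_eq_finrank_span_cols]
  rfl

lemma PosDef.transpose_mul_mul_same_of_rank_eq_card {m n : Type*} [Fintype m] [Fintype n]
    {A : Matrix n n ℝ} (hA : A.PosDef) {B : Matrix n m ℝ} (hB : B.rank = Fintype.card m) :
    (Bᵀ * A * B).PosDef := by
  simpa only [conjTranspose_eq_transpose_of_trivial] using
    hA.conjTranspose_mul_mul_same (mulVec_injective_of_rank_eq_card hB)

lemma mul_vecMulVec_mul_transpose {l m n o K : Type*} [Fintype m] [Fintype n] [CommSemiring K]
    (M : Matrix l m K) (N : Matrix o n K) (x : m → K) (y : n → K) :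
    M * vecMulVec x y * Nᵀ = vecMulVec (M *ᵥ x) (N *ᵥ y) := by
  rw [mul_vecMulVec, vecMulVec_mul, vecMul_transpose]

lemma mul_mul_transpose_eq_of_isIdempotentElem {m n K : Type*} [Fintype n] [CommSemiring K]
    {S : Matrix n n K} (hS : S.IsSymm) (hS' : IsIdempotentElem S) (N : Matrix m n K) :
    N * S * (N * S)ᵀ = N * S * Nᵀ := by
  rw [transpose_mul, hS.eq, Matrix.mul_assoc, ← Matrix.mul_assoc S S, hS'.eq, Matrix.mul_assoc]

section HatMatrix

variable {m n R : Type*} [Fintype m] [Fintype n] [DecidableEq n] [CommRing R]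

/-- The orthogonal projection onto the column space of `A` (when `Aᵀ A` is invertible). -/
noncomputable def hatMatrix (A : Matrix m n R) : Matrix m m R := A * (Aᵀ * A)⁻¹ * Aᵀ

lemma isSymm_hatMatrix (A : Matrix m n R) : (hatMatrix A).IsSymm := by
  simp only [IsSymm, hatMatrix, transpose_mul, transpose_transpose, transpose_nonsing_inv,
    Matrix.mul_assoc]

lemma isIdempotentElem_hatMatrix {A : Matrix m n R} (hA : IsUnit (Aᵀ * A)) :
    IsIdempotentElem (hatMatrix A) := by
  have hdet : IsUnit (Aᵀ * A).det := (isUnit_iff_isUnit_det _).mp hA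
  calc hatMatrix A * hatMatrix A = A * ((Aᵀ * A)⁻¹ * (Aᵀ * A)) * (Aᵀ * A)⁻¹ * Aᵀ := by
        simp only [hatMatrix, Matrix.mul_assoc]
    _ = hatMatrix A := by rw [nonsing_inv_mul _ hdet, Matrix.mul_one, hatMatrix]

end HatMatrix

lemma inv_mul_mul_inv_mulVec_affine {n K : Type*} [Fintype n] [DecidableEq n] [CommRing K]
    {R : Matrix n n K} (hR : IsUnit R) (P : Matrix n n K) (τ w : n → K) :
    (R⁻¹ * P * R⁻¹) *ᵥ ((R * R) *ᵥ τ + R *ᵥ w) - τ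
      = -((R⁻¹ * (1 - P) * R) *ᵥ τ) + (R⁻¹ * P) *ᵥ w := by
  have hRinv : R⁻¹ * R = 1 := nonsing_inv_mul R ((isUnit_iff_isUnit_det R).mp hR)
  have hquad : R⁻¹ * P * R⁻¹ * (R * R) = R⁻¹ * P * R := by
    rw [← Matrix.mul_assoc, Matrix.mul_assoc _ R⁻¹, hRinv, Matrix.mul_one]
  have hlin : R⁻¹ * P * R⁻¹ * R = R⁻¹ * P := by rw [Matrix.mul_assoc, hRinv, Matrix.mul_one]
  rw [Matrix.mul_sub, Matrix.mul_one, Matrix.sub_mul, hRinv, mulVec_add, mulVec_mulVec,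
    mulVec_mulVec, hquad, hlin, sub_mulVec, one_mulVec]
  abel

end Matrix

section StdGaussian

variable {p : ℕ} {m : Type*}

instance : IsProbabilityMeasure (stdGaussian p) := by
  unfold _root_.stdGaussian; infer_instance

lemma integral_sub_sq_gaussianReal (μ : ℝ) (v : NNReal) :
    ∫ x, (x - μ) ^ 2 ∂gaussianReal μ v = v := by
  have h := variance_id_gaussianReal (μ := μ) (v := v)
  simpa [variance_eq_integral aemeasurable_id, integral_id_gaussianReal] using h

lemma memLp_eval_stdGaussian (k : Fin p) : MemLp (fun w => w k) 2 (stdGaussian p) :=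
  (memLp_id_gaussianReal' 2 (by simp)).comp_measurePreserving (measurePreserving_eval _ k)

lemma integral_eval_stdGaussian (k : Fin p) : ∫ w, w k ∂stdGaussian p = 0 := by
  rw [_root_.stdGaussian, integral_eval, integral_id_gaussianReal]

lemma integral_eval_mul_eval_stdGaussian (k l : Fin p) :
    ∫ w, w k * w l ∂stdGaussian p = (1 : Matrix (Fin p) (Fin p) ℝ) k l := by
  rcases eq_or_ne k l with rfl | hkl
  · simp_rw [one_apply_eq, ← sq]
    rw [_root_.stdGaussian, integral_comp_eval (f := fun x => x ^ 2) (by fun_prop)]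
    simpa using integral_sub_sq_gaussianReal 0 1
  · have hindep : IndepFun (fun w => w k) (fun w => w l) (stdGaussian p) :=
      (iIndepFun_pi (X := fun _ => id) (fun _ => aemeasurable_id)).indepFun hkl
    rw [one_apply_ne hkl, hindep.integral_fun_mul_eq_mul_integral
      (measurable_pi_apply k).aestronglyMeasurable (measurable_pi_apply l).aestronglyMeasurable,
      integral_eval_stdGaussian, zero_mul]

lemma memLp_mulVec_stdGaussian (M : Matrix m (Fin p) ℝ) (i : m) :
    MemLp (fun w => (M *ᵥ w) i) 2 (stdGaussian p) := by
  simp only [mulVec, dotProduct]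
  exact memLp_finsetSum _ fun k _ => (memLp_eval_stdGaussian k).const_mul (M i k)

lemma integral_mulVec_stdGaussian (M : Matrix m (Fin p) ℝ) (i : m) :
    ∫ w, (M *ᵥ w) i ∂stdGaussian p = 0 := by
  simp only [mulVec, dotProduct]
  rw [integral_finsetSum _ fun k _ =>
    ((memLp_eval_stdGaussian k).integrable one_le_two).const_mul _]
  simp [integral_const_mul, integral_eval_stdGaussian]

lemma integral_mulVec_mul_mulVec_stdGaussian (M N : Matrix m (Fin p) ℝ) (i j : m) :
    ∫ w, (M *ᵥ w) i * (N *ᵥ w) j ∂stdGaussian p = (M * Nᵀ) i j := by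
  have hint : ∀ k l, Integrable (fun w : Fin p → ℝ => w k * w l) (stdGaussian p) :=
    fun k l => (memLp_eval_stdGaussian k).integrable_mul (memLp_eval_stdGaussian l)
  simp only [mulVec, dotProduct, Finset.sum_mul_sum, mul_mul_mul_comm]
  rw [integral_finsetSum _ fun k _ => integrable_finsetSum _ fun l _ => (hint k l).const_mul _]
  simp_rw [integral_finsetSum _ fun l _ => (hint _ l).const_mul _, integral_const_mul,
    integral_eval_mul_eval_stdGaussian]
  simp [mul_apply, one_apply]

lemma integral_add_mulVec_stdGaussian (c : m → ℝ) (M : Matrix m (Fin p) ℝ) (i : m) :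
    ∫ w, (c + M *ᵥ w) i ∂stdGaussian p = c i := by
  simp only [Pi.add_apply]
  rw [integral_add (integrable_const _)
    ((memLp_mulVec_stdGaussian M i).integrable one_le_two), integral_mulVec_stdGaussian]
  simp

lemma integral_add_mulVec_mul_add_mulVec_stdGaussian (c : m → ℝ) (M : Matrix m (Fin p) ℝ)
    (i j : m) :
    ∫ w, (c + M *ᵥ w) i * (c + M *ᵥ w) j ∂stdGaussian p = c i * c j + (M * Mᵀ) i j := by
  have hi := (memLp_mulVec_stdGaussian M i).integrable one_le_two
  have hj := (memLp_mulVec_stdGaussian M j).integrable one_le_two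
  have hij : Integrable (fun w => (M *ᵥ w) i * (M *ᵥ w) j) (stdGaussian p) :=
    (memLp_mulVec_stdGaussian M i).integrable_mul (memLp_mulVec_stdGaussian M j)
  have hexpand : ∀ w : Fin p → ℝ, (c + M *ᵥ w) i * (c + M *ᵥ w) j
      = c i * c j + (c i * (M *ᵥ w) j + c j * (M *ᵥ w) i) + (M *ᵥ w) i * (M *ᵥ w) j := by
    intro w
    simp only [Pi.add_apply]
    ring
  simp_rw [hexpand]
  rw [integral_add ((integrable_const _).fun_add ((hj.const_mul _).fun_add (hi.const_mul _))) hij,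
    integral_add (integrable_const _) ((hj.const_mul _).fun_add (hi.const_mul _)),
    integral_add (hj.const_mul _) (hi.const_mul _)]
  simp [integral_const_mul, integral_mulVec_stdGaussian, integral_mulVec_mul_mulVec_stdGaussian]

end StdGaussian

theorem stmt16 (p r : ℕ) (Γ : Matrix (Fin p) (Fin p) ℝ) (hΓ : Γ.PosDef)
    (Υ : Matrix (Fin p) (Fin r) ℝ) (hΥ : Υ.rank = r)
    (τ : Fin p → ℝ) :
    let R := hΓ.posSemidef.sqrt
    let P := R * Υ * (Υᵀ * Γ * Υ)⁻¹ * Υᵀ * R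
    let Pperp := (1 : Matrix (Fin p) (Fin p) ℝ) - P
    let X : (Fin p → ℝ) → Fin p → ℝ := fun w => Γ.mulVec τ + R.mulVec w
    let Y : (Fin p → ℝ) → Fin p → ℝ := fun w => (R⁻¹ * P * R⁻¹).mulVec (X w) - τ
    let δ : Fin p → ℝ := -(R⁻¹ * Pperp * R).mulVec τ
    (∀ i, ∫ w, Y w i ∂(stdGaussian p) = δ i) ∧
    (∀ i j, ∫ w, Y w i * Y w j ∂(stdGaussian p) - δ i * δ j = (R⁻¹ * P * R⁻¹) i j) ∧
    (∀ i j, ∫ w, Y w i * Y w j ∂(stdGaussian p)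
      = (R⁻¹ * P * R⁻¹ + R⁻¹ * Pperp * R * vecMulVec τ τ * R * Pperp * R⁻¹) i j) := by
  intro R P Pperp X Y δ
  have hRR : R * R = Γ := hΓ.posSemidef.sqrt_mul_self
  have hRT : Rᵀ = R := hΓ.posSemidef.isHermitian_sqrt
  have hR : IsUnit R := hΓ.isUnit_sqrt
  have hgram : (R * Υ)ᵀ * (R * Υ) = Υᵀ * Γ * Υ := by
    rw [transpose_mul, hRT, ← hRR]
    simp only [Matrix.mul_assoc]
  have hPhat : P = hatMatrix (R * Υ) := by
    rw [hatMatrix, hgram, transpose_mul, hRT]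
    simp only [P, Matrix.mul_assoc]
  have hPsymm : P.IsSymm := hPhat ▸ isSymm_hatMatrix _
  have hPidem : IsIdempotentElem P := hPhat ▸ isIdempotentElem_hatMatrix (hgram ▸
    (hΓ.transpose_mul_mul_same_of_rank_eq_card (by rwa [Fintype.card_fin])).isUnit)
  have hY : ∀ w, Y w = δ + (R⁻¹ * P) *ᵥ w := fun w => by
    simpa only [hRR] using inv_mul_mul_inv_mulVec_affine hR P τ w
  have hcov : R⁻¹ * P * (R⁻¹ * P)ᵀ = R⁻¹ * P * R⁻¹ := by
    rw [mul_mul_transpose_eq_of_isIdempotentElem hPsymm hPidem, transpose_nonsing_inv, hRT]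
  have hbias : R⁻¹ * Pperp * R * vecMulVec τ τ * R * Pperp * R⁻¹ = vecMulVec δ δ := by
    have hBT : (R⁻¹ * Pperp * R)ᵀ = R * Pperp * R⁻¹ := by
      rw [transpose_mul, transpose_mul, transpose_nonsing_inv, hRT,
        (isSymm_one.sub hPsymm).eq, Matrix.mul_assoc]
    rw [show δ = -((R⁻¹ * Pperp * R) *ᵥ τ) from rfl, neg_vecMulVec, vecMulVec_neg, neg_neg,
      ← mul_vecMulVec_mul_transpose, hBT]
    simp only [Matrix.mul_assoc]
  refine ⟨fun i => ?_, fun i j => ?_, fun i j => ?_⟩ <;>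
    simp only [hY, integral_add_mulVec_stdGaussian, integral_add_mulVec_mul_add_mulVec_stdGaussian,
      hcov, hbias, Matrix.add_apply, vecMulVec_apply] <;>
    ring
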